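/- arXiv:2406.05878 — 4 statements merged into one kernel-verified Lean document; each statement's English description precedes it below -/
import Mathlib

section
/- For fixed μ > 0, the derivative d'(k) of d(k) = arctanh(μ/k)/k is strictly increasing on (μ, ∞). -/
/-!
Write `d'(k) = k⁻² g(k)` with `g(k) = μk/(μ² − k²) − artanh(μ/k)`. The logarithmic parts cancel
in `g'(k) = 2μk²/(μ² − k²)²`, so `d''(k) = 2μ/(μ² − k²)² − 2 g(k)/k³`. For `k > μ` both terms of
`g` make it negative, hence `d'' > 0`.
-/

noncomputable def artanh (x : ℝ) : ℝ := (1 / 2) * Real.log ((1 + x) / (1 - x))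

lemma hasDerivAt_artanh {x : ℝ} (hx : x ∈ Set.Ioo (-1) 1) :
    HasDerivAt artanh (1 / (1 - x ^ 2)) x := by
  obtain ⟨hx₁, hx₂⟩ := hx
  have h₁ : 0 < 1 + x := by linarith
  have h₂ : 0 < 1 - x := by linarith
  have h₃ : 1 - x ^ 2 ≠ 0 := by nlinarith
  have hquot : HasDerivAt (fun y => (1 + y) / (1 - y)) (2 / (1 - x) ^ 2) x :=
    (((hasDerivAt_id' x).const_add 1).div ((hasDerivAt_id' x).const_sub 1) h₂.ne').congr_deriv
      (by ring)
  refine ((hquot.log (div_pos h₁ h₂).ne').const_mul (1 / 2)).congr_deriv ?_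
  field_simp
  ring

lemma artanh_pos {x : ℝ} (hx : x ∈ Set.Ioo 0 1) : 0 < artanh x := by
  obtain ⟨hx₀, hx₁⟩ := hx
  have hquot : 1 < (1 + x) / (1 - x) := (one_lt_div (by linarith)).2 (by linarith)
  exact mul_pos one_half_pos (Real.log_pos hquot)

lemma div_mem_Ioo_of_abs_lt_abs {μ k : ℝ} (hk : |μ| < |k|) : μ / k ∈ Set.Ioo (-1) 1 := by
  have hk0 : 0 < |k| := (abs_nonneg μ).trans_lt hk
  rw [Set.mem_Ioo, ← abs_lt, abs_div, div_lt_one hk0]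
  exact hk

lemma hasDerivAt_artanh_div {μ k : ℝ} (hk : |μ| < |k|) :
    HasDerivAt (fun k => artanh (μ / k)) (μ / (μ ^ 2 - k ^ 2)) k := by
  have hk0 : k ≠ 0 := abs_pos.1 ((abs_nonneg μ).trans_lt hk)
  have hsq : k ^ 2 - μ ^ 2 ≠ 0 := (sub_pos.2 (sq_lt_sq.2 hk)).ne'
  have hsq' : μ ^ 2 - k ^ 2 ≠ 0 := (sub_neg.2 (sq_lt_sq.2 hk)).ne
  refine ((hasDerivAt_artanh (div_mem_Ioo_of_abs_lt_abs hk)).comp k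
    ((hasDerivAt_const k μ).div (hasDerivAt_id' k) hk0)).congr_deriv ?_
  field_simp
  ring

lemma hasDerivAt_artanh_div_div {μ k : ℝ} (hk : |μ| < |k|) :
    HasDerivAt (fun k => artanh (μ / k) / k)
      (1 / k ^ 2 * (μ * k / (μ ^ 2 - k ^ 2) - artanh (μ / k))) k := by
  have hk0 : k ≠ 0 := abs_pos.1 ((abs_nonneg μ).trans_lt hk)
  refine ((hasDerivAt_artanh_div hk).div (hasDerivAt_id' k) hk0).congr_deriv ?_
  field_simp

lemma hasDerivAt_sub_artanh_div {μ k : ℝ} (hk : |μ| < |k|) :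
    HasDerivAt (fun k => μ * k / (μ ^ 2 - k ^ 2) - artanh (μ / k))
      (2 * μ * k ^ 2 / (μ ^ 2 - k ^ 2) ^ 2) k := by
  have hsq : μ ^ 2 - k ^ 2 ≠ 0 := (sub_neg.2 (sq_lt_sq.2 hk)).ne
  have hrat := ((hasDerivAt_id' k).const_mul μ).div ((hasDerivAt_pow 2 k).const_sub (μ ^ 2)) hsq
  refine (hrat.sub (hasDerivAt_artanh_div hk)).congr_deriv ?_
  field_simp
  ring

lemma hasDerivAt_one_div_sq_mul_sub_artanh_div {μ k : ℝ} (hk : |μ| < |k|) :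
    HasDerivAt (fun k => 1 / k ^ 2 * (μ * k / (μ ^ 2 - k ^ 2) - artanh (μ / k)))
      (2 * μ / (μ ^ 2 - k ^ 2) ^ 2 - 2 / k ^ 3 * (μ * k / (μ ^ 2 - k ^ 2) - artanh (μ / k))) k := by
  have hk0 : k ≠ 0 := abs_pos.1 ((abs_nonneg μ).trans_lt hk)
  have hsq : μ ^ 2 - k ^ 2 ≠ 0 := (sub_neg.2 (sq_lt_sq.2 hk)).ne
  have hinv : HasDerivAt (fun k : ℝ => 1 / k ^ 2) (-2 / k ^ 3) k :=
    ((hasDerivAt_const k 1).div (hasDerivAt_pow 2 k) (pow_ne_zero 2 hk0)).congr_deriv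
      (by field_simp; ring)
  refine (hinv.mul (hasDerivAt_sub_artanh_div hk)).congr_deriv ?_
  field_simp
  ring

lemma sub_artanh_div_neg {μ k : ℝ} (hμ : 0 < μ) (hk : μ < k) :
    μ * k / (μ ^ 2 - k ^ 2) - artanh (μ / k) < 0 := by
  have hk0 : 0 < k := hμ.trans hk
  have hrat : μ * k / (μ ^ 2 - k ^ 2) < 0 :=
    div_neg_of_pos_of_neg (by positivity) (sub_neg.2 (pow_lt_pow_left₀ hk hμ.le two_ne_zero))
  have hartanh : 0 < artanh (μ / k) := artanh_pos ⟨by positivity, (div_lt_one hk0).2 hk⟩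
  linarith

lemma depth_second_deriv_pos {μ k : ℝ} (hμ : 0 < μ) (hk : μ < k) :
    0 < 2 * μ / (μ ^ 2 - k ^ 2) ^ 2 - 2 / k ^ 3 * (μ * k / (μ ^ 2 - k ^ 2) - artanh (μ / k)) := by
  have hk0 : 0 < k := hμ.trans hk
  have hsq : μ ^ 2 - k ^ 2 ≠ 0 := (sub_neg.2 (pow_lt_pow_left₀ hk hμ.le two_ne_zero)).ne
  have := mul_pos (by positivity : (0 : ℝ) < 2 / k ^ 3) (neg_pos.2 (sub_artanh_div_neg hμ hk))
  have : 0 < 2 * μ / (μ ^ 2 - k ^ 2) ^ 2 := by positivity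
  linarith

/-- For fixed `μ > 0`, the derivative `d'(k) = k⁻²·(μk/(μ²−k²) − artanh(μ/k))`
of `d(k) = artanh(μ/k)/k` is strictly increasing on `(μ, ∞)`. -/
theorem depth_deriv_strictMonoOn (μ : ℝ) (hμ : 0 < μ) :
    (∀ k ∈ Set.Ioi μ,
      deriv (fun k : ℝ => artanh (μ / k) / k) k
        = (1 / k ^ 2) * (μ * k / (μ ^ 2 - k ^ 2) - artanh (μ / k))) ∧
    StrictMonoOn (deriv (fun k : ℝ => artanh (μ / k) / k)) (Set.Ioi μ) := by
  have habs : ∀ k ∈ Set.Ioi μ, |μ| < |k| := fun k (hk : μ < k) => by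
    rwa [abs_of_pos hμ, abs_of_pos (hμ.trans hk)]
  have hderiv : ∀ k ∈ Set.Ioi μ, deriv (fun k : ℝ => artanh (μ / k) / k) k
      = (1 / k ^ 2) * (μ * k / (μ ^ 2 - k ^ 2) - artanh (μ / k)) :=
    fun k hk => (hasDerivAt_artanh_div_div (habs k hk)).deriv
  refine ⟨hderiv, StrictMonoOn.congr ?_ fun k hk => (hderiv k hk).symm⟩
  have hd2 (k) (hk : k ∈ Set.Ioi μ) := hasDerivAt_one_div_sq_mul_sub_artanh_div (habs k hk)
  exact strictMonoOn_of_hasDerivWithinAt_pos (convex_Ioi μ)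
    (fun k hk => (hd2 k hk).continuousAt.continuousWithinAt)
    (fun k hk => (hd2 k (interior_subset hk)).hasDerivWithinAt)
    (fun k hk => depth_second_deriv_pos hμ (interior_subset hk))
end

section
/- The function p(t) = t·sech²(t)/(tanh(t) + t·sech²(t)) satisfies 0 ≤ p(t) ≤ 1/2 for all t > 0. -/
/-- `p(t) = t·sech²(t)/(tanh(t) + t·sech²(t))`. -/
noncomputable def pFun (t : ℝ) : ℝ :=
  t * (1 / Real.cosh t) ^ 2 / (Real.tanh t + t * (1 / Real.cosh t) ^ 2)

/-- `0 ≤ p(t) ≤ 1/2` for all `t > 0`. -/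
theorem pFun_bounds (t : ℝ) (ht : 0 < t) : 0 ≤ pFun t ∧ pFun t ≤ 1 / 2 := by
  have hc := Real.cosh_pos t
  have hs : 0 < Real.sinh t := Real.sinh_pos_iff.mpr ht
  have htanh : 0 < Real.tanh t := by
    rw [Real.tanh_eq_sinh_div_cosh]; positivity
  have hN : 0 < t * (1 / Real.cosh t) ^ 2 := by positivity
  have h2 : t ≤ Real.sinh t * Real.cosh t := by
    nlinarith [Real.self_lt_sinh_iff.mpr (by linarith : (0:ℝ) < 2 * t), Real.sinh_two_mul t]
  have hkey : t * (1 / Real.cosh t) ^ 2 ≤ Real.tanh t := by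
    have he : t * (1 / Real.cosh t) ^ 2 = t / Real.cosh t ^ 2 := by ring
    rw [he, Real.tanh_eq_sinh_div_cosh, div_le_div_iff₀ (by positivity) hc]
    nlinarith
  have hD : 0 < Real.tanh t + t * (1 / Real.cosh t) ^ 2 := by linarith
  constructor
  · exact div_nonneg hN.le hD.le
  · rw [pFun, div_le_iff₀ hD]
    linarith
end

section
/- For μ > 0 and k > μ, the truncated depth function d_α defined by d_α(k) = arctanh(μ/k)/k for k ≥ μ + α and d_α(k) = arctanh(μ/(μ+α))/(μ+α) for k < μ + α is globally Lipschitz on (0, ∞) with Lipschitz constant at most 3/((μ+α)·α). -/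
/-- The truncated depth function `d_α`. -/
noncomputable def dAlpha (μ α k : ℝ) : ℝ :=
  if μ + α ≤ k then artanh (μ / k) / k else artanh (μ / (μ + α)) / (μ + α)

lemma artanh_eq (μ k : ℝ) (hμ : 0 < μ) (hk : μ < k) :
    artanh (μ / k) = (1 / 2) * (Real.log (k + μ) - Real.log (k - μ)) := by
  have hk0 : (0:ℝ) < k := lt_trans hμ hk
  have h2 : (0:ℝ) < 1 - μ / k := by
    rw [sub_pos]; exact (div_lt_one hk0).mpr hk
  have h1 : (1 + μ / k) / (1 - μ / k) = (k + μ) / (k - μ) := by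
    rw [div_eq_div_iff h2.ne' (by linarith : (0:ℝ) < k - μ).ne']
    field_simp
  rw [artanh, h1, Real.log_div (by positivity) (by linarith : (0:ℝ) < k - μ).ne']

lemma lip_on_Ici (μ α : ℝ) (hμ : 0 < μ) (hα : 0 < α) :
    ∀ x ∈ Set.Ici (μ + α), ∀ y ∈ Set.Ici (μ + α),
      dist (dAlpha μ α x) (dAlpha μ α y) ≤ (3 / ((μ + α) * α)) * dist x y := by
  set h : ℝ → ℝ := fun k => (1 / 2) * (Real.log (k + μ) - Real.log (k - μ)) / k with hh
  set D : ℝ → ℝ := fun k =>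
    ((1 / 2) * (1 / (k + μ) - 1 / (k - μ)) * k
      - (1 / 2) * (Real.log (k + μ) - Real.log (k - μ)) * 1) / k ^ 2 with hD
  have hL0 : (0:ℝ) ≤ 3 / ((μ + α) * α) := by positivity
  have hlip : LipschitzOnWith (3 / ((μ + α) * α)).toNNReal h (Set.Ici (μ + α)) := by
    apply (convex_Ici (μ + α)).lipschitzOnWith_of_nnnorm_hasDerivWithin_le (f' := D)
    · intro k hk
      have hk' : μ + α ≤ k := hk
      have hkμ : μ < k := by linarith
      have hkp : (0:ℝ) < k := by linarith
      have hd1 : HasDerivAt (fun x : ℝ => Real.log (x + μ)) (1 / (k + μ)) k := by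
        have := ((hasDerivAt_id k).add_const μ).log
          (by simp only [id_eq]; positivity)
        simpa using this
      have hd2 : HasDerivAt (fun x : ℝ => Real.log (x - μ)) (1 / (k - μ)) k := by
        have := ((hasDerivAt_id k).sub_const μ).log
          (by simp only [id_eq]; exact sub_ne_zero.mpr (ne_of_gt hkμ))
        simpa using this
      have hnum : HasDerivAt (fun x : ℝ => (1 / 2) * (Real.log (x + μ) - Real.log (x - μ)))
          ((1 / 2) * (1 / (k + μ) - 1 / (k - μ))) k := (hd1.sub hd2).const_mul _
      exact (hnum.div (hasDerivAt_id k) (ne_of_gt hkp)).hasDerivWithinAt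
    · intro k hk
      have hk' : μ + α ≤ k := hk
      have hkμ : μ < k := by linarith
      have hkp : (0:ℝ) < k := by linarith
      have hs : α ≤ k - μ := by linarith
      have hsp : (0:ℝ) < k - μ := by linarith
      have hkμp : (0:ℝ) < k + μ := by linarith
      rw [← NNReal.coe_le_coe, coe_nnnorm, Real.coe_toNNReal _ hL0, Real.norm_eq_abs]
      set B := (1 / 2) * (Real.log (k + μ) - Real.log (k - μ)) with hB
      have hB0 : 0 ≤ B := by
        have := Real.log_le_log hsp (by linarith : k - μ ≤ k + μ)
        rw [hB]; linarith
      have hB1 : B ≤ μ / (k - μ) := by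
        have h1 : Real.log (k + μ) - Real.log (k - μ) = Real.log ((k + μ) / (k - μ)) := by
          rw [Real.log_div (by positivity) (by positivity)]
        have h2 : Real.log ((k + μ) / (k - μ)) ≤ (k + μ) / (k - μ) - 1 :=
          Real.log_le_sub_one_of_pos (by positivity)
        have h3 : (k + μ) / (k - μ) - 1 = 2 * (μ / (k - μ)) := by
          field_simp; ring
        rw [hB, h1]; linarith
      have hAval : (1 / 2) * (1 / (k + μ) - 1 / (k - μ)) * k
          = -(μ * k / ((k + μ) * (k - μ))) := by
        field_simp
        ring
      have habs : |D k| ≤ (μ * k / ((k + μ) * (k - μ)) + μ / (k - μ)) / k ^ 2 := by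
        rw [hD]
        simp only
        rw [abs_div, abs_of_pos (by positivity : (0:ℝ) < k ^ 2)]
        gcongr
        calc |(1 / 2) * (1 / (k + μ) - 1 / (k - μ)) * k - B * 1|
            ≤ |(1 / 2) * (1 / (k + μ) - 1 / (k - μ)) * k| + |B * 1| := abs_sub _ _
          _ = μ * k / ((k + μ) * (k - μ)) + B := by
              rw [hAval, abs_neg, abs_of_nonneg (by positivity), mul_one,
                abs_of_nonneg hB0]
          _ ≤ μ * k / ((k + μ) * (k - μ)) + μ / (k - μ) := by linarith
      refine habs.trans ?_
      rw [add_div, div_div, div_div]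
      have e1 : (μ + α) * α ≤ k * (k - μ) := mul_le_mul hk' hs hα.le hkp.le
      have e2 : μ * k ≤ k * k := by nlinarith
      have hb1 : μ * k / ((k + μ) * (k - μ) * k ^ 2) ≤ 1 / ((μ + α) * α) := by
        rw [div_le_div_iff₀ (by positivity) (by positivity)]
        nlinarith [mul_le_mul e2 e1 (by positivity) (by nlinarith : (0:ℝ) ≤ k * k),
          mul_nonneg (mul_nonneg hμ.le hsp.le) (sq_nonneg k)]
      have e3 : (μ + α) * (μ + α) ≤ k * k := mul_le_mul hk' hk' (by linarith) hkp.le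
      have hb2 : μ / ((k - μ) * k ^ 2) ≤ 1 / ((μ + α) * α) := by
        rw [div_le_div_iff₀ (by positivity) (by positivity)]
        nlinarith [mul_le_mul hs e3 (by positivity) hsp.le,
          mul_pos hμ hα, mul_pos (mul_pos hμ hα) hα]
      have h3 : (0:ℝ) < 1 / ((μ + α) * α) := by positivity
      have hsplit : 3 / ((μ + α) * α) = 3 * (1 / ((μ + α) * α)) := by ring
      rw [hsplit]
      linarith
  have heq : ∀ k, μ + α ≤ k → dAlpha μ α k = h k := by
    intro k hk
    have hkμ : μ < k := by linarith
    rw [dAlpha, if_pos hk, artanh_eq μ k hμ hkμ]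
  intro x hx y hy
  have := (lipschitzOnWith_iff_dist_le_mul.mp hlip) x hx y hy
  rw [Real.coe_toNNReal _ hL0] at this
  rw [heq x hx, heq y hy]
  exact this

/-- For `μ, α > 0`, the truncated depth function `d_α` is Lipschitz on `(0, ∞)` with
constant at most `3/((μ+α)·α)`. -/
theorem dAlpha_lipschitz (μ α : ℝ) (hμ : 0 < μ) (hα : 0 < α) :
    LipschitzOnWith (3 / ((μ + α) * α)).toNNReal (dAlpha μ α) (Set.Ioi 0) := by
  have hL0 : (0:ℝ) ≤ 3 / ((μ + α) * α) := by positivity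
  have key := lip_on_Ici μ α hμ hα
  have hconst : ∀ k, ¬ (μ + α ≤ k) → dAlpha μ α k = dAlpha μ α (μ + α) := by
    intro k hk
    rw [dAlpha, dAlpha, if_neg hk, if_pos le_rfl]
  rw [lipschitzOnWith_iff_dist_le_mul]
  intro x hx y hy
  rw [Real.coe_toNNReal _ hL0]
  by_cases hx' : μ + α ≤ x <;> by_cases hy' : μ + α ≤ y
  · exact key x hx' y hy'
  · rw [hconst y hy']
    refine (key x hx' (μ + α) Set.self_mem_Ici).trans ?_
    have hyx : dist x (μ + α) ≤ dist x y := by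
      rw [Real.dist_eq, Real.dist_eq]
      have := not_le.mp hy'
      rw [abs_of_nonneg (by linarith), abs_of_nonneg (by linarith)]
      linarith
    exact mul_le_mul_of_nonneg_left hyx hL0
  · rw [hconst x hx']
    refine (key (μ + α) Set.self_mem_Ici y hy').trans ?_
    have hyx : dist (μ + α) y ≤ dist x y := by
      rw [Real.dist_eq, Real.dist_eq]
      have := not_le.mp hx'
      rw [abs_of_nonpos (by linarith), abs_of_nonpos (by linarith)]
      linarith
    exact mul_le_mul_of_nonneg_left hyx hL0
  · rw [hconst x hx', hconst y hy', dist_self]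
    positivity
end

section
/- For all x > 0, tanh(x) ≥ x/√(1 + x²). -/
/-- For all `x > 0`, `tanh(x) ≥ x/√(1 + x²)`. -/
theorem tanh_ge_div_sqrt (x : ℝ) (hx : 0 < x) :
    x / Real.sqrt (1 + x ^ 2) ≤ Real.tanh x := by
  have hs : x ≤ Real.sinh x := Real.self_le_sinh_iff.mpr hx.le
  have hc : 0 < Real.cosh x := Real.cosh_pos x
  have hcsq : Real.cosh x ^ 2 = Real.sinh x ^ 2 + 1 := Real.cosh_sq x
  set A := Real.sqrt (1 + x ^ 2) with hAdef
  have hApos : 0 < A := Real.sqrt_pos.mpr (by positivity)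
  have hA : A ^ 2 = 1 + x ^ 2 := Real.sq_sqrt (by positivity)
  rw [Real.tanh_eq_sinh_div_cosh, div_le_div_iff₀ hApos hc]
  have hsq : (x * Real.cosh x) ^ 2 ≤ (Real.sinh x * A) ^ 2 := by
    nlinarith [mul_pos hx (lt_of_lt_of_le hx hs), sq_nonneg x, sq_nonneg (Real.sinh x)]
  have h1 : 0 ≤ x * Real.cosh x := by positivity
  have h2 : 0 ≤ Real.sinh x * A := by positivity
  nlinarith [hsq, h1, h2, sq_nonneg (x * Real.cosh x - Real.sinh x * A)]
end
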